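/- arXiv:1910.10022 — 6 statements merged into one kernel-verified Lean document; each statement's English description precedes it below -/
import Mathlib

section
/- Let ℓ, k be positive integers and let w be a finitely supported multi-index (into the natural numbers) with |w| = ℓ + k and every component w_j even. Then the number of pairs of multi-indices (m, ν) with |m| = ℓ, |ν| = k, and m + ν = w is at most (min(ℓ,k) + 1)^{(ℓ+k)/2}. -/
/-!
A split `m + ν = w` is determined by `m` on the support of `w`, and each coordinate `m j` lies
in the interval `[w j - k, min ℓ (w j)]`, which has at most `min ℓ k + 1` points. So there are at
most `(min ℓ k + 1) ^ #w.support` splits, and since every nonzero `w j` is even, hence at least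
`2`, the support of `w` has at most `|w| / 2 = (ℓ + k) / 2` elements.
-/

open Finset

namespace Finsupp

variable {ι : Type*}

lemma two_mul_card_support_le_degree {w : ι →₀ ℕ} (heven : ∀ j, Even (w j)) :
    2 * #w.support ≤ degree w := by
  rw [degree_apply, mul_comm, ← smul_eq_mul, ← Finset.sum_const]
  refine Finset.sum_le_sum fun j hj => ?_
  obtain ⟨r, hr⟩ := heven j
  have := mem_support_iff.mp hj
  omega

lemma eq_of_add_eq_of_eqOn_support {w : ι →₀ ℕ} {p q : (ι →₀ ℕ) × (ι →₀ ℕ)}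
    (hp : p.1 + p.2 = w) (hq : q.1 + q.2 = w) (h : ∀ j ∈ w.support, p.1 j = q.1 j) : p = q := by
  have hp' j : p.1 j + p.2 j = w j := by rw [← hp, add_apply]
  have hq' j : q.1 j + q.2 j = w j := by rw [← hq, add_apply]
  have h₁ : p.1 = q.1 := by
    ext j
    by_cases hj : j ∈ w.support
    · exact h j hj
    · have := notMem_support_iff.mp hj
      grind
  have h₂ : p.2 = q.2 := by
    ext j
    have := DFunLike.congr_fun h₁ j
    grind
  exact Prod.ext h₁ h₂

lemma ncard_splits_le (ℓ k : ℕ) (w : ι →₀ ℕ) :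
    {p : (ι →₀ ℕ) × (ι →₀ ℕ) | degree p.1 = ℓ ∧ degree p.2 = k ∧ p.1 + p.2 = w}.ncard
      ≤ (min ℓ k + 1) ^ #w.support := by
  set S := {p : (ι →₀ ℕ) × (ι →₀ ℕ) | degree p.1 = ℓ ∧ degree p.2 = k ∧ p.1 + p.2 = w}
  have bounds : ∀ p ∈ S, ∀ j, p.1 j + p.2 j = w j ∧ p.1 j ≤ ℓ ∧ p.2 j ≤ k := by
    rintro p ⟨h₁, h₂, hsum⟩ j
    exact ⟨by rw [← hsum, add_apply], h₁ ▸ le_degree j p.1, h₂ ▸ le_degree j p.2⟩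
  let f : S → (w.support → Fin (min ℓ k + 1)) := fun p j =>
    ⟨p.1.1 j - (w j - k), by have := bounds p.1 p.2 j; omega⟩
  have hf : Function.Injective f := by
    rintro ⟨p, hp⟩ ⟨q, hq⟩ hpq
    refine Subtype.ext (eq_of_add_eq_of_eqOn_support hp.2.2 hq.2.2 fun j hj => ?_)
    show p.1 j = q.1 j
    have hshift : p.1 j - (w j - k) = q.1 j - (w j - k) :=
      congrArg Fin.val (congrFun hpq ⟨j, hj⟩)
    have := bounds p hp j
    have := bounds q hq j
    omega
  calc S.ncard = Nat.card S := (Nat.card_coe_set_eq S).symm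
    _ ≤ Nat.card (w.support → Fin (min ℓ k + 1)) := Nat.card_le_card_of_injective f hf
    _ = (min ℓ k + 1) ^ #w.support := by
      rw [Nat.card_fun, Nat.card_eq_fintype_card, Fintype.card_fin, Nat.card_eq_fintype_card,
        Fintype.card_coe]

end Finsupp

theorem multiindex_split_count_general {ι : Type*} (ℓ k : ℕ)
    (w : ι →₀ ℕ) (hw : (w.sum fun _ n => n) = ℓ + k) (heven : ∀ j, Even (w j)) :
    Set.ncard {p : (ι →₀ ℕ) × (ι →₀ ℕ) |
        (p.1.sum fun _ n => n) = ℓ ∧ (p.2.sum fun _ n => n) = k ∧ p.1 + p.2 = w}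
      ≤ (min ℓ k + 1) ^ ((ℓ + k) / 2) := by
  have hsupp : #w.support ≤ (ℓ + k) / 2 := by
    have := Finsupp.two_mul_card_support_le_degree heven
    rw [show Finsupp.degree w = ℓ + k from hw] at this
    omega
  calc _ ≤ (min ℓ k + 1) ^ #w.support := Finsupp.ncard_splits_le ℓ k w
    _ ≤ _ := Nat.pow_le_pow_right (Nat.succ_pos _) hsupp

theorem multiindex_split_count {ι : Type*} (ℓ k : ℕ) (hℓ : 1 ≤ ℓ) (hk : 1 ≤ k)
    (w : ι →₀ ℕ) (hw : (w.sum fun _ n => n) = ℓ + k) (heven : ∀ j, Even (w j)) :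
    Set.ncard {p : (ι →₀ ℕ) × (ι →₀ ℕ) |
        (p.1.sum fun _ n => n) = ℓ ∧ (p.2.sum fun _ n => n) = k ∧ p.1 + p.2 = w}
      ≤ (min ℓ k + 1) ^ ((ℓ + k) / 2) :=
  multiindex_split_count_general ℓ k w hw heven
end

section
/- Let (b_j)_{j≥1} be a nonincreasing sequence of nonnegative reals with ∑_{j≥1} b_j^p < ∞ for some 0 < p < 1. Then for every s ≥ 1, ∑_{j≥s+1} b_j ≤ min(1/(1/p - 1), 1) · (∑_{j≥1} b_j^p)^{1/p} · s^{-(1/p - 1)}. -/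
/-!
Writing `S = ∑ b_j^p` and `r = 1/p > 1`, monotonicity gives `j b_j^p ≤ S`, i.e. Stechkin's
bound `b_j ≤ S^r j^{-r}`. Summing it over `j > s` and comparing with `∫_s^∞ t^{-r} dt` bounds the
tail by `S^r s^{1-r} / (r - 1)`; alternatively `b_j = b_j^{1-p} b_j^p ≤ b_s^{1-p} b_j^p` bounds it
by `b_s^{1-p} S ≤ S^r s^{1-r}`. The tail is below both, hence below their minimum.
-/

open Finset

lemma sum_range_rpow_neg_le {r x : ℝ} (hr : 1 < r) (hx : 0 < x) (n : ℕ) :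
    ∑ j ∈ range n, (x + ↑(j + 1)) ^ (-r) ≤ x ^ (1 - r) / (r - 1) := by
  have hanti : AntitoneOn (fun t : ℝ => t ^ (-r)) (Set.Icc x (x + n)) := fun a ha _ _ hab =>
    Real.rpow_le_rpow_of_nonpos (hx.trans_le ha.1) hab (by linarith)
  have hpos : 0 ≤ (x + n) ^ (1 - r) := by positivity
  calc _ ≤ ∫ t in x..x + n, t ^ (-r) := hanti.sum_le_integral
    _ = (x ^ (1 - r) - (x + n) ^ (1 - r)) / (r - 1) := by
      rw [integral_rpow (Or.inr ⟨by linarith, Set.notMem_uIcc_of_lt hx (by positivity)⟩),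
        show -r + 1 = 1 - r by ring, ← neg_div_neg_eq, neg_sub, neg_sub]
    _ ≤ x ^ (1 - r) / (r - 1) := by gcongr; linarith

lemma tsum_le_rpow_one_sub_mul_tsum_rpow {ι : Type*} {f : ι → ℝ} {p M : ℝ} (hp : p ≤ 1)
    (h0 : ∀ i, 0 ≤ f i) (hM : ∀ i, f i ≤ M) (hs : Summable fun i => f i ^ p) :
    ∑' i, f i ≤ M ^ (1 - p) * ∑' i, f i ^ p := by
  have hle : ∀ i, f i ≤ M ^ (1 - p) * f i ^ p := fun i => calc
    f i = f i ^ (1 - p) * f i ^ p := by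
      rw [← Real.rpow_add' (h0 i) (by norm_num), sub_add_cancel, Real.rpow_one]
    _ ≤ M ^ (1 - p) * f i ^ p :=
      mul_le_mul_of_nonneg_right (Real.rpow_le_rpow (h0 i) (hM i) (by linarith))
        (Real.rpow_nonneg (h0 i) p)
  rw [← tsum_mul_left]
  exact (hs.mul_left _).of_nonneg_of_le h0 hle |>.tsum_le_tsum hle (hs.mul_left _)

namespace Antitone

variable {c : ℕ → ℝ} {p : ℝ}

lemma succ_mul_le_tsum (hc : Antitone c) (h0 : 0 ≤ c) (hs : Summable c) (n : ℕ) :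
    ((n : ℝ) + 1) * c n ≤ ∑' k, c k := calc
  ((n : ℝ) + 1) * c n = ∑ _k ∈ range (n + 1), c n := by simp
  _ ≤ ∑ k ∈ range (n + 1), c k :=
    sum_le_sum fun k hk => hc (Nat.lt_succ_iff.mp (mem_range.mp hk))
  _ ≤ ∑' k, c k := hs.sum_le_tsum _ fun k _ => h0 k

lemma le_rpow_of_summable_rpow (hc : Antitone c) (h0 : 0 ≤ c) (hp : 0 < p)
    (hs : Summable fun k => c k ^ p) (n : ℕ) :
    c n ≤ ((∑' k, c k ^ p) / (n + 1)) ^ (1 / p) := by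
  have hcp : Antitone fun k => c k ^ p := fun _ _ h => Real.rpow_le_rpow (h0 _) (hc h) hp.le
  have hmul := hcp.succ_mul_le_tsum (fun k => Real.rpow_nonneg (h0 k) p) hs n
  calc c n = (c n ^ p) ^ (1 / p) := by
        rw [← Real.rpow_mul (h0 n), mul_one_div_cancel hp.ne', Real.rpow_one]
    _ ≤ _ := by
      gcongr
      · exact Real.rpow_nonneg (h0 n) p
      · rw [le_div_iff₀ (by positivity), mul_comm]; exact hmul

variable (hc : Antitone c) (h0 : 0 ≤ c) (hp0 : 0 < p) (hs : Summable fun k => c k ^ p)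
include hc h0 hp0 hs

lemma tsum_add_le_div_mul_rpow_neg (hp1 : p < 1) {s : ℕ} (hs0 : 0 < s) :
    ∑' j, c (s + j) ≤
      1 / (1 / p - 1) * (∑' k, c k ^ p) ^ (1 / p) * (s : ℝ) ^ (-(1 / p - 1)) := by
  set S := ∑' k, c k ^ p
  have hS : 0 ≤ S := tsum_nonneg fun k => Real.rpow_nonneg (h0 k) p
  have hr : 1 < 1 / p := by rw [lt_div_iff₀ hp0]; linarith
  refine Real.tsum_le_of_sum_range_le (fun j => h0 _) fun n => ?_
  calc ∑ j ∈ range n, c (s + j)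
      ≤ ∑ j ∈ range n, S ^ (1 / p) * ((s : ℝ) + ↑(j + 1)) ^ (-(1 / p)) := by
        refine sum_le_sum fun j _ => (hc.le_rpow_of_summable_rpow h0 hp0 hs _).trans_eq ?_
        rw [Real.div_rpow hS (by positivity), Real.rpow_neg (by positivity), div_eq_mul_inv]
        push_cast; ring_nf
    _ = S ^ (1 / p) * ∑ j ∈ range n, ((s : ℝ) + ↑(j + 1)) ^ (-(1 / p)) := (mul_sum ..).symm
    _ ≤ S ^ (1 / p) * ((s : ℝ) ^ (1 - 1 / p) / (1 / p - 1)) := by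
        gcongr; exact sum_range_rpow_neg_le hr (by positivity) n
    _ = _ := by rw [neg_sub]; ring

lemma tsum_add_le_mul_rpow_neg (hp1 : p ≤ 1) {s : ℕ} (hs0 : 0 < s) :
    ∑' j, c (s + j) ≤ (∑' k, c k ^ p) ^ (1 / p) * (s : ℝ) ^ (-(1 / p - 1)) := by
  obtain ⟨m, rfl⟩ : ∃ m, s = m + 1 := ⟨s - 1, by omega⟩
  set S := ∑' k, c k ^ p
  have hS : 0 ≤ S := tsum_nonneg fun k => Real.rpow_nonneg (h0 k) p
  have hshift : Function.Injective (m + 1 + ·) := add_right_injective (m + 1)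
  have htail : ∑' j, c (m + 1 + j) ≤ c m ^ (1 - p) * S := calc
    _ ≤ c m ^ (1 - p) * ∑' j, c (m + 1 + j) ^ p :=
      tsum_le_rpow_one_sub_mul_tsum_rpow hp1 (fun j => h0 _)
        (fun j => hc (by omega : m ≤ m + 1 + j)) (hs.comp_injective hshift)
    _ ≤ c m ^ (1 - p) * S := mul_le_mul_of_nonneg_left
        (tsum_comp_le_tsum_of_inj hs (fun k => Real.rpow_nonneg (h0 k) p) hshift)
        (Real.rpow_nonneg (h0 m) _)
  have hSr : S ^ (1 / p) = S ^ (1 / p - 1) * S := by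
    rw [← Real.rpow_add_one' hS (by rw [sub_add_cancel]; positivity), sub_add_cancel]
  calc _ ≤ c m ^ (1 - p) * S := htail
    _ ≤ ((S / (m + 1)) ^ (1 / p)) ^ (1 - p) * S := mul_le_mul_of_nonneg_right
        (Real.rpow_le_rpow (h0 m) (hc.le_rpow_of_summable_rpow h0 hp0 hs m) (by linarith)) hS
    _ = _ := by
        rw [← Real.rpow_mul (by positivity), one_div_mul_eq_div, sub_div, div_self hp0.ne',
          Real.div_rpow hS (by positivity), hSr, Real.rpow_neg (by positivity)]
        push_cast; ring

end Antitone

theorem tail_sum_bound_of_antitone_p_summable (b : ℕ → ℝ) (p : ℝ)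
    (hp0 : 0 < p) (hp1 : p < 1)
    (hnn : ∀ j, 0 ≤ b j)
    (hmono : ∀ j k : ℕ, 1 ≤ j → j ≤ k → b k ≤ b j)
    (hsum : Summable fun j : ℕ => b (j + 1) ^ p)
    (s : ℕ) (hs : 1 ≤ s) :
    (∑' j : ℕ, b (s + 1 + j)) ≤
      min (1 / (1 / p - 1)) 1 * (∑' j : ℕ, b (j + 1) ^ p) ^ (1 / p)
        * (s : ℝ) ^ (-(1 / p - 1)) := by
  have hanti : Antitone fun k => b (k + 1) := fun k l hkl => hmono _ _ (by omega) (by omega)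
  have hnn' : 0 ≤ fun k => b (k + 1) := fun k => hnn _
  have htail : ∑' j, b (s + 1 + j) = ∑' j, b (s + j + 1) := by simp_rw [add_right_comm s 1]
  have hS0 : 0 ≤ ∑' j, b (j + 1) ^ p := tsum_nonneg fun j => Real.rpow_nonneg (hnn _) p
  have hS : 0 ≤ (∑' j, b (j + 1) ^ p) ^ (1 / p) * (s : ℝ) ^ (-(1 / p - 1)) := by positivity
  rw [htail, mul_assoc, min_mul_of_nonneg _ _ hS, one_mul, ← mul_assoc]
  exact le_min (hanti.tsum_add_le_div_mul_rpow_neg hnn' hp0 hsum hp1 hs)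
    (hanti.tsum_add_le_mul_rpow_neg hnn' hp0 hsum hp1.le hs)
end

section
/- Let (c_ν) be defined recursively over finitely supported multi-indices ν by c_0 ≤ C and c_ν ≤ ∑_{j : ν_j ≥ 1} ν_j b_j c_{ν - e_j} + C |ν|! b^ν for ν ≠ 0, where b^ν = ∏_j b_j^{ν_j}, (b_j) are nonnegative reals and C ≥ 0. Then c_ν ≤ C (|ν| + 1)! b^ν for all finitely supported multi-indices ν. -/
/-! Induction along the componentwise order on multi-indices. Bounding each `c (ν - e_j)` by
`C |ν|! b^(ν - e_j)` and using `b^(ν - e_j) b_j = b^ν` and `∑_j ν_j = |ν|`, the recursive sum is at most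
`|ν| C |ν|! b^ν`; adding the source term `C |ν|! b^ν` gives `C (|ν| + 1)! b^ν`. -/

open Finsupp Nat

namespace Finsupp

variable {ι : Type*} {ν : ι →₀ ℕ} {j : ι}

lemma sub_single_one_lt (h : ν j ≠ 0) : ν - single j 1 < ν :=
  (lt_add_of_pos_right _ (by simp [pos_iff_ne_zero])).trans_eq (sub_add_single_one_cancel h)

lemma degree_sub_single_one_add_one (h : ν j ≠ 0) : degree (ν - single j 1) + 1 = degree ν := by
  conv_rhs => rw [← sub_add_single_one_cancel h]
  rw [map_add, degree_single]

lemma prod_pow_sub_single_one_mul {M : Type*} [CommMonoid M] (b : ι → M) (h : ν j ≠ 0) :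
    (ν - single j 1).prod (fun i n => b i ^ n) * b j = ν.prod fun i n => b i ^ n := by
  conv_rhs => rw [← sub_add_single_one_cancel h]
  rw [prod_add_index' (fun _ => pow_zero _) (fun _ _ _ => pow_add _ _ _)]
  simp only [prod_single_index, pow_zero, pow_one]

end Finsupp

lemma sum_mul_le_degree_mul {ι : Type*} (b : ι → ℝ) (hb : ∀ j, 0 ≤ b j) (C : ℝ)
    (c : (ι →₀ ℕ) → ℝ) (ν : ι →₀ ℕ)
    (hc : ∀ j ∈ ν.support,
      c (ν - single j 1) ≤ C * (degree ν)! * (ν - single j 1).prod fun i n => b i ^ n) :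
    ∑ j ∈ ν.support, (ν j : ℝ) * b j * c (ν - single j 1)
      ≤ degree ν * (C * (degree ν)! * ν.prod fun i n => b i ^ n) := by
  calc ∑ j ∈ ν.support, (ν j : ℝ) * b j * c (ν - single j 1)
      ≤ ∑ j ∈ ν.support, (ν j : ℝ) * (C * (degree ν)! * ν.prod fun i n => b i ^ n) := by
        refine Finset.sum_le_sum fun j hj => ?_
        rw [← prod_pow_sub_single_one_mul b (mem_support_iff.mp hj)]
        have := mul_le_mul_of_nonneg_left (hc j hj) (mul_nonneg (Nat.cast_nonneg (ν j)) (hb j))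
        linarith
    _ = degree ν * (C * (degree ν)! * ν.prod fun i n => b i ^ n) := by
        rw [← Finset.sum_mul, degree_apply, Nat.cast_sum]

theorem recursive_multiindex_bound_general {ι : Type*}
    (b : ι → ℝ) (hb : ∀ j, 0 ≤ b j) (C : ℝ)
    (c : (ι →₀ ℕ) → ℝ)
    (h0 : c 0 ≤ C)
    (hrec : ∀ ν : ι →₀ ℕ, ν ≠ 0 →
      c ν ≤ (∑ j ∈ ν.support, (ν j : ℝ) * b j * c (ν - Finsupp.single j 1))
        + C * (Nat.factorial (ν.sum fun _ n => n)) * (ν.prod fun j n => b j ^ n)) :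
    ∀ ν : ι →₀ ℕ,
      c ν ≤ C * (Nat.factorial ((ν.sum fun _ n => n) + 1))
        * (ν.prod fun j n => b j ^ n) := by
  change ∀ ν, c ν ≤ C * (degree ν + 1)! * ν.prod fun j n => b j ^ n
  intro ν
  induction ν using WellFoundedLT.induction with
  | _ ν ih =>
  rcases eq_or_ne ν 0 with rfl | hν
  · simpa using h0
  have hc : ∀ j ∈ ν.support,
      c (ν - single j 1) ≤ C * (degree ν)! * (ν - single j 1).prod fun i n => b i ^ n := by
    intro j hj
    have hj := mem_support_iff.mp hj
    simpa only [degree_sub_single_one_add_one hj] using ih _ (sub_single_one_lt hj)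
  calc c ν ≤ _ := hrec ν hν
    _ ≤ degree ν * (C * (degree ν)! * ν.prod fun j n => b j ^ n)
          + C * (degree ν)! * ν.prod fun j n => b j ^ n :=
        add_le_add_left (sum_mul_le_degree_mul b hb C c ν hc) _
    _ = C * (degree ν + 1)! * ν.prod fun j n => b j ^ n := by
        rw [Nat.factorial_succ]; push_cast; ring

theorem recursive_multiindex_bound {ι : Type*} [DecidableEq ι]
    (b : ι → ℝ) (hb : ∀ j, 0 ≤ b j) (C : ℝ) (hC : 0 ≤ C)
    (c : (ι →₀ ℕ) → ℝ)
    (h0 : c 0 ≤ C)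
    (hrec : ∀ ν : ι →₀ ℕ, ν ≠ 0 →
      c ν ≤ (∑ j ∈ ν.support, (ν j : ℝ) * b j * c (ν - Finsupp.single j 1))
        + C * (Nat.factorial (ν.sum fun _ n => n)) * (ν.prod fun j n => b j ^ n)) :
    ∀ ν : ι →₀ ℕ,
      c ν ≤ C * (Nat.factorial ((ν.sum fun _ n => n) + 1))
        * (ν.prod fun j n => b j ^ n) :=
  recursive_multiindex_bound_general b hb C c h0 hrec
end

section
/- For any finitely supported multi-index ν, ∑_{m ≤ ν} (∏_j binom(ν_j, m_j)) |m|! |ν - m|! = (|ν| + 1)!, where the sum is over all multi-indices m with m_j ≤ ν_j for all j, and |m| = ∑_j m_j. -/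
/-!
Group the multi-indices `m ≤ ν` by their order `k = |m|`. Summed over `|m| = k`, the products
`∏ⱼ (νⱼ choose mⱼ)` form the coefficient of `X ^ k` in `∏ⱼ (1 + X) ^ νⱼ = (1 + X) ^ |ν|`, which is
`|ν| choose k`. The sum thus becomes `∑_{k ≤ |ν|} (|ν| choose k) k! (|ν| - k)! = (|ν| + 1) |ν|!`.
-/

open Finset
open scoped Nat

theorem PowerSeries.coeff_one_add_X_pow (R : Type*) [Semiring R] (n k : ℕ) :
    coeff k ((1 + X : PowerSeries R) ^ n) = n.choose k := by
  rw [← Polynomial.coeff_one_add_X_pow, ← Polynomial.coeff_coe]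
  simp

theorem Finset.sum_finsuppAntidiag_prod_choose {ι : Type*} [DecidableEq ι] (s : Finset ι)
    (ν : ι → ℕ) (k : ℕ) :
    ∑ l ∈ finsuppAntidiag s k, ∏ i ∈ s, (ν i).choose (l i) = (∑ i ∈ s, ν i).choose k := by
  have h := PowerSeries.coeff_prod (fun i ↦ (1 + PowerSeries.X : PowerSeries ℕ) ^ ν i) k s
  simp only [prod_pow_eq_pow_sum, PowerSeries.coeff_one_add_X_pow, Nat.cast_id] at h
  exact h.symm

namespace Finsupp

variable {ι : Type*}

theorem degree_tsub {ν m : ι →₀ ℕ} (h : m ≤ ν) : (ν - m).degree = ν.degree - m.degree := by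
  rw [eq_tsub_iff_add_eq_of_le (degree_mono h), ← map_add, tsub_add_cancel_of_le h]

variable [DecidableEq ι]

theorem sum_Iic_filter_degree_prod_choose (ν : ι →₀ ℕ) (k : ℕ) :
    ∑ m ∈ Iic ν with m.degree = k, ∏ j ∈ ν.support, (ν j).choose (m j) = ν.degree.choose k := by
  rw [degree_apply, ← sum_finsuppAntidiag_prod_choose]
  refine sum_subset (fun m hm ↦ ?_) (fun l hl hlν ↦ ?_)
  · rw [mem_filter, mem_Iic] at hm
    exact mem_finsuppAntidiag'.2 ⟨hm.2, support_mono hm.1⟩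
  · obtain ⟨hl, hsupp⟩ := mem_finsuppAntidiag'.1 hl
    obtain ⟨j, hj⟩ : ∃ j, ν j < l j := by
      by_contra! hle
      exact hlν (mem_filter.2 ⟨mem_Iic.2 hle, hl⟩)
    exact prod_eq_zero (hsupp (mem_support_iff.2 (by omega))) (Nat.choose_eq_zero_of_lt hj)

theorem sum_Iic_prod_choose_mul_degree (ν : ι →₀ ℕ) (g : ℕ → ℕ) :
    ∑ m ∈ Iic ν, (∏ j ∈ ν.support, (ν j).choose (m j)) * g m.degree
      = ∑ k ∈ range (ν.degree + 1), ν.degree.choose k * g k := by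
  have hmaps : ∀ m ∈ Iic ν, m.degree ∈ range (ν.degree + 1) := fun m hm ↦
    mem_range_succ_iff.2 (degree_mono (mem_Iic.1 hm))
  rw [← sum_fiberwise_of_maps_to hmaps]
  refine Finset.sum_congr rfl fun k _ ↦ ?_
  rw [← sum_Iic_filter_degree_prod_choose, Finset.sum_mul]
  exact Finset.sum_congr rfl fun m hm ↦ by rw [(mem_filter.1 hm).2]

end Finsupp

open Finsupp in
theorem multiindex_factorial_identity {ι : Type*} [DecidableEq ι] (ν : ι →₀ ℕ) :
    ∑ m ∈ Finset.Iic ν,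
        ((∏ j ∈ ν.support, Nat.choose (ν j) (m j))
          * Nat.factorial (m.sum fun _ n => n)
          * Nat.factorial ((ν - m).sum fun _ n => n))
      = Nat.factorial ((ν.sum fun _ n => n) + 1) := by
  change ∑ m ∈ Iic ν, (∏ j ∈ ν.support, (ν j).choose (m j)) * m.degree ! * (ν - m).degree !
    = (ν.degree + 1)!
  calc _ = ∑ m ∈ Iic ν,
          (∏ j ∈ ν.support, (ν j).choose (m j)) * (m.degree ! * (ν.degree - m.degree)!) :=
        Finset.sum_congr rfl fun m hm ↦ by rw [degree_tsub (mem_Iic.1 hm), mul_assoc]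
    _ = ∑ k ∈ range (ν.degree + 1), ν.degree.choose k * (k ! * (ν.degree - k)!) :=
        sum_Iic_prod_choose_mul_degree ν fun k ↦ k ! * (ν.degree - k)!
    _ = ∑ k ∈ range (ν.degree + 1), ν.degree ! :=
        Finset.sum_congr rfl fun k hk ↦ by
          rw [← mul_assoc, Nat.choose_mul_factorial_mul_factorial (mem_range_succ_iff.1 hk)]
    _ = (ν.degree + 1)! := by rw [sum_const, card_range, smul_eq_mul, Nat.factorial_succ]
end

section
/- Let (φ_j)_{j=1}^∞ be nonnegative reals with ∑_{j=1}^∞ φ_j^k < ∞ for some 0 < k < 1. Then the sequence a_s := ∑_{u ⊆ {1,...,s}} ((|u|+1)!)^k ∏_{j∈u} φ_j^k, indexed by s, is bounded above by ∑_{l=0}^∞ ((l+1)!)^k / l! · (∑_{j=1}^∞ φ_j^k)^l, which is finite. -/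
/-!
Grouping the subsets by size turns the sum into `∑ₗ ((l+1)!)^k eₗ`, where `eₗ` is the `l`-th
elementary symmetric sum of the weights `φⱼ^k`. Marking one element of each `(l+1)`-subset and
removing it gives `(l+1) eₗ₊₁ ≤ S eₗ` with `S = ∑ φⱼ^k`, hence `l! eₗ ≤ S^l`. The series
converges by the ratio test: consecutive terms have ratio `(l+2)^k S / (l+1) → 0` as `k < 1`.
-/

open Finset Filter Topology

section

open scoped Nat

namespace Finset

variable {ι R : Type*} [DecidableEq ι] [CommSemiring R] [PartialOrder R] [IsOrderedRing R]
  {t : Finset ι} {f : ι → R}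

theorem sum_powersetCard_succ_filter_mem_prod_le (hf : ∀ j ∈ t, 0 ≤ f j) {i : ι} (hi : i ∈ t)
    (l : ℕ) :
    ∑ u ∈ (t.powersetCard (l + 1)).filter (i ∈ ·), ∏ j ∈ u, f j ≤
      f i * ∑ v ∈ t.powersetCard l, ∏ j ∈ v, f j := by
  have herase : Set.InjOn (·.erase i) ((t.powersetCard (l + 1)).filter (i ∈ ·) : Set (Finset ι)) :=
    fun u hu v hv huv => by
      rw [mem_coe, mem_filter] at hu hv
      rw [← insert_erase hu.2, ← insert_erase hv.2]
      exact congrArg (insert i) huv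
  have himage : ((t.powersetCard (l + 1)).filter (i ∈ ·)).image (·.erase i) ⊆ t.powersetCard l := by
    simp only [subset_iff, mem_image, mem_filter, mem_powersetCard]
    rintro _ ⟨u, ⟨⟨hut, hcard⟩, hiu⟩, rfl⟩
    exact ⟨(erase_subset i u).trans hut, by rw [card_erase_of_mem hiu, hcard, Nat.add_sub_cancel]⟩
  calc ∑ u ∈ (t.powersetCard (l + 1)).filter (i ∈ ·), ∏ j ∈ u, f j
      = f i * ∑ u ∈ (t.powersetCard (l + 1)).filter (i ∈ ·), ∏ j ∈ u.erase i, f j := by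
        rw [mul_sum]
        exact sum_congr rfl fun u hu => (mul_prod_erase u f (mem_filter.1 hu).2).symm
    _ = f i * ∑ v ∈ ((t.powersetCard (l + 1)).filter (i ∈ ·)).image (·.erase i), ∏ j ∈ v, f j := by
        rw [sum_image herase]
    _ ≤ f i * ∑ v ∈ t.powersetCard l, ∏ j ∈ v, f j := by
        gcongr
        · exact hf i hi
        · intro v hv _
          exact prod_nonneg fun j hj => hf j (mem_powersetCard.1 hv |>.1 hj)

theorem succ_mul_sum_powersetCard_prod_le (hf : ∀ j ∈ t, 0 ≤ f j) (l : ℕ) :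
    (l + 1 : R) * ∑ u ∈ t.powersetCard (l + 1), ∏ j ∈ u, f j ≤
      (∑ i ∈ t, f i) * ∑ v ∈ t.powersetCard l, ∏ j ∈ v, f j :=
  calc (l + 1 : R) * ∑ u ∈ t.powersetCard (l + 1), ∏ j ∈ u, f j
      = ∑ u ∈ t.powersetCard (l + 1), ∑ i ∈ u, ∏ j ∈ u, f j := by
        rw [mul_sum]
        refine sum_congr rfl fun u hu => ?_
        rw [sum_const, (mem_powersetCard.1 hu).2, nsmul_eq_mul, Nat.cast_succ]
    _ = ∑ i ∈ t, ∑ u ∈ (t.powersetCard (l + 1)).filter (i ∈ ·), ∏ j ∈ u, f j :=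
        sum_comm' fun u i => by
          simp only [mem_filter, mem_powersetCard]
          exact ⟨fun ⟨hu, hi⟩ => ⟨⟨hu, hi⟩, hu.1 hi⟩, fun ⟨⟨hu, hi⟩, _⟩ => ⟨hu, hi⟩⟩
    _ ≤ ∑ i ∈ t, f i * ∑ v ∈ t.powersetCard l, ∏ j ∈ v, f j :=
        sum_le_sum fun i hi => sum_powersetCard_succ_filter_mem_prod_le hf hi l
    _ = (∑ i ∈ t, f i) * ∑ v ∈ t.powersetCard l, ∏ j ∈ v, f j := (sum_mul ..).symm

theorem factorial_mul_sum_powersetCard_prod_le (hf : ∀ j ∈ t, 0 ≤ f j) (l : ℕ) :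
    (l ! : R) * ∑ u ∈ t.powersetCard l, ∏ j ∈ u, f j ≤ (∑ i ∈ t, f i) ^ l := by
  induction l with
  | zero => simp
  | succ l ih =>
    have hsum : 0 ≤ ∑ i ∈ t, f i := sum_nonneg hf
    calc ((l + 1)! : R) * ∑ u ∈ t.powersetCard (l + 1), ∏ j ∈ u, f j
        = (l ! : R) * ((l + 1 : R) * ∑ u ∈ t.powersetCard (l + 1), ∏ j ∈ u, f j) := by
          push_cast [Nat.factorial_succ]; ring
      _ ≤ (l ! : R) * ((∑ i ∈ t, f i) * ∑ v ∈ t.powersetCard l, ∏ j ∈ v, f j) :=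
          mul_le_mul_of_nonneg_left (succ_mul_sum_powersetCard_prod_le hf l) (by positivity)
      _ = (∑ i ∈ t, f i) * ((l ! : R) * ∑ v ∈ t.powersetCard l, ∏ j ∈ v, f j) := by ring
      _ ≤ (∑ i ∈ t, f i) * (∑ i ∈ t, f i) ^ l := by gcongr
      _ = (∑ i ∈ t, f i) ^ (l + 1) := (pow_succ' ..).symm

theorem sum_powerset_mul_prod_le {K : Type*} [Field K] [LinearOrder K] [IsStrictOrderedRing K]
    {f : ι → K} (hf : ∀ j ∈ t, 0 ≤ f j) {g : ℕ → K} (hg : ∀ l, 0 ≤ g l) {S : K}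
    (hS : ∑ i ∈ t, f i ≤ S) :
    ∑ u ∈ t.powerset, g #u * ∏ j ∈ u, f j ≤ ∑ l ∈ range (#t + 1), g l / l ! * S ^ l := by
  rw [sum_powerset]
  refine sum_le_sum fun l _ => ?_
  have hbound : ∑ u ∈ t.powersetCard l, ∏ j ∈ u, f j ≤ S ^ l / l ! := by
    rw [le_div_iff₀ (by positivity), mul_comm]
    exact (factorial_mul_sum_powersetCard_prod_le hf l).trans
      (pow_le_pow_left₀ (sum_nonneg hf) hS l)
  calc ∑ u ∈ t.powersetCard l, g #u * ∏ j ∈ u, f j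
      = g l * ∑ u ∈ t.powersetCard l, ∏ j ∈ u, f j := by
        rw [mul_sum]
        exact sum_congr rfl fun u hu => by rw [(mem_powersetCard.1 hu).2]
    _ ≤ g l * (S ^ l / l !) := mul_le_mul_of_nonneg_left hbound (hg l)
    _ = g l / l ! * S ^ l := by ring

end Finset

theorem summable_of_succ_eq_mul {a c : ℕ → ℝ} (hc : Tendsto c atTop (𝓝 0))
    (ha : ∀ n, a (n + 1) = c n * a n) : Summable a := by
  refine summable_of_ratio_norm_eventually_le (r := 1 / 2) (by norm_num) ?_
  filter_upwards [hc.norm.eventually (gt_mem_nhds (by norm_num : ‖(0 : ℝ)‖ < 1 / 2))]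
    with n hn
  rw [ha, norm_mul]
  exact mul_le_mul_of_nonneg_right hn.le (norm_nonneg _)

theorem tendsto_natCast_add_two_rpow_div_add_one {k : ℝ} (hk : k < 1) :
    Tendsto (fun n : ℕ => ((n : ℝ) + 2) ^ k / (n + 1)) atTop (𝓝 0) := by
  have hlim : Tendsto (fun n : ℕ => ((n : ℝ) + 2) ^ (k - 1)) atTop (𝓝 0) := by
    have := (tendsto_rpow_neg_atTop (by linarith : 0 < 1 - k)).comp
      (tendsto_atTop_add_const_right _ 2 tendsto_natCast_atTop_atTop)
    simpa [Function.comp_def] using this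
  refine squeeze_zero (fun n => by positivity) (fun n => ?_) (by simpa using hlim.const_mul 2)
  have hn : (0 : ℝ) < n + 2 := by positivity
  rw [div_le_iff₀ (by positivity), Real.rpow_sub_one hn.ne']
  calc ((n : ℝ) + 2) ^ k = ((n : ℝ) + 2) ^ k / (n + 2) * (n + 2) := by field_simp
    _ ≤ ((n : ℝ) + 2) ^ k / (n + 2) * (2 * (n + 1)) := by gcongr; linarith
    _ = 2 * (((n : ℝ) + 2) ^ k / (n + 2)) * (n + 1) := by ring

theorem summable_factorial_succ_rpow_div_factorial_mul_pow {k : ℝ} (hk : k < 1) (x : ℝ) :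
    Summable fun l : ℕ => ((l + 1)! : ℝ) ^ k / l ! * x ^ l := by
  refine summable_of_succ_eq_mul (c := fun n => ((n : ℝ) + 2) ^ k / (n + 1) * x)
    (by simpa using (tendsto_natCast_add_two_rpow_div_add_one hk).mul_const x) fun n => ?_
  have hfac : ((n + 1 + 1)! : ℝ) = ((n : ℝ) + 2) * (n + 1)! := by
    push_cast [Nat.factorial_succ (n + 1)]; ring
  rw [hfac, Real.mul_rpow (by positivity) (by positivity), Nat.factorial_succ n]
  push_cast
  field_simp
  ring

end

theorem weighted_subset_sum_bounded_general (φ : ℕ → ℝ) (hφ : ∀ j, 0 ≤ φ j)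
    (k : ℝ) (hk1 : k < 1)
    (hsum : Summable fun j : ℕ => φ j ^ k) :
    Summable (fun l : ℕ =>
        ((Nat.factorial (l + 1) : ℝ) ^ k / (Nat.factorial l : ℝ))
          * (∑' j : ℕ, φ j ^ k) ^ l) ∧
    ∀ s : ℕ,
      (∑ u ∈ (Finset.range s).powerset,
          ((Nat.factorial (u.card + 1) : ℝ) ^ k * ∏ j ∈ u, φ j ^ k)) ≤
        ∑' l : ℕ,
          ((Nat.factorial (l + 1) : ℝ) ^ k / (Nat.factorial l : ℝ))
            * (∑' j : ℕ, φ j ^ k) ^ l := by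
  have hφk : ∀ j, 0 ≤ φ j ^ k := fun j => Real.rpow_nonneg (hφ j) k
  have hsummable := summable_factorial_succ_rpow_div_factorial_mul_pow hk1 (∑' j, φ j ^ k)
  refine ⟨hsummable, fun s => ?_⟩
  have hpartial : ∑ j ∈ range s, φ j ^ k ≤ ∑' j, φ j ^ k :=
    hsum.sum_le_tsum _ fun j _ => hφk j
  calc _ ≤ ∑ l ∈ range (s + 1),
          ((l + 1).factorial : ℝ) ^ k / l.factorial * (∑' j, φ j ^ k) ^ l := by
        simpa using sum_powerset_mul_prod_le (fun j _ => hφk j)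
          (g := fun l => ((l + 1).factorial : ℝ) ^ k) (fun l => by positivity) hpartial
    _ ≤ _ := hsummable.sum_le_tsum _ fun l _ => by
        have : 0 ≤ ∑' j, φ j ^ k := tsum_nonneg hφk
        positivity

theorem weighted_subset_sum_bounded (φ : ℕ → ℝ) (hφ : ∀ j, 0 ≤ φ j)
    (k : ℝ) (hk0 : 0 < k) (hk1 : k < 1)
    (hsum : Summable fun j : ℕ => φ j ^ k) :
    Summable (fun l : ℕ =>
        ((Nat.factorial (l + 1) : ℝ) ^ k / (Nat.factorial l : ℝ))
          * (∑' j : ℕ, φ j ^ k) ^ l) ∧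
    ∀ s : ℕ,
      (∑ u ∈ (Finset.range s).powerset,
          ((Nat.factorial (u.card + 1) : ℝ) ^ k * ∏ j ∈ u, φ j ^ k)) ≤
        ∑' l : ℕ,
          ((Nat.factorial (l + 1) : ℝ) ^ k / (Nat.factorial l : ℝ))
            * (∑' j : ℕ, φ j ^ k) ^ l :=
  weighted_subset_sum_bounded_general φ hφ k hk1 hsum
end

section
/- Let V be a real Hilbert space, b : V × V → ℝ a bilinear form satisfying b(v,v) ≥ a_min ‖v‖² and |b(w,v)| ≤ a_max ‖w‖‖v‖ with 0 < a_min ≤ a_max, let V_h ⊆ V be a closed subspace, and let u ∈ V and u_h ∈ V_h satisfy b(u, v) = F(v) for all v ∈ V and b(u_h, v_h) = F(v_h) for all v_h ∈ V_h, for a bounded linear functional F. Then ‖u - u_h‖ ≤ (a_max / a_min) inf_{v_h ∈ V_h} ‖u - v_h‖. -/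
/-!
With `e = u - uₕ`, Galerkin orthogonality `b(e, wₕ) = 0` for `wₕ ∈ Vₕ` lets us replace the second
argument of `b(e, e)` by `u - vₕ` for any `vₕ ∈ Vₕ`, since `e - (u - vₕ) = vₕ - uₕ ∈ Vₕ`. Then
`a_min ‖e‖² ≤ b(e, e) = b(e, u - vₕ) ≤ a_max ‖e‖ ‖u - vₕ‖`.
-/

section Galerkin

variable {E : Type*}

theorem galerkin_orthogonality [AddCommGroup E] [Module ℝ E] {B : E → E → ℝ}
    (hB' : ∀ v : E, IsLinearMap ℝ fun w => B w v) {S : Submodule ℝ E} {F : E → ℝ} {u uh : E}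
    (hu : ∀ v ∈ S, B u v = F v) (huh : ∀ v ∈ S, B uh v = F v) :
    ∀ v ∈ S, B (u - uh) v = 0 := by
  intro v hv
  have hsub : B (u - uh) v = B u v - B uh v := (hB' v).map_sub u uh
  rw [hsub, hu v hv, huh v hv, sub_self]

theorem apply_self_eq_apply_sub_of_orthogonal [AddCommGroup E] [Module ℝ E] {B : E → E → ℝ}
    (hB : ∀ w : E, IsLinearMap ℝ (B w)) {S : Submodule ℝ E} {u uh vh : E}
    (horth : ∀ v ∈ S, B (u - uh) v = 0) (huh : uh ∈ S) (hvh : vh ∈ S) :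
    B (u - uh) (u - uh) = B (u - uh) (u - vh) := by
  have hsplit : u - vh = (u - uh) + (uh - vh) := by abel
  rw [hsplit, (hB (u - uh)).map_add, horth _ (S.sub_mem huh hvh), add_zero]

theorem mul_norm_le_of_coercive_of_bounded [SeminormedAddCommGroup E] {B : E → E → ℝ}
    {amin amax : ℝ} (hamax : 0 ≤ amax) (hcoer : ∀ v : E, amin * ‖v‖ ^ 2 ≤ B v v)
    (hbdd : ∀ w v : E, |B w v| ≤ amax * ‖w‖ * ‖v‖) {e w : E} (h : B e e = B e w) :
    amin * ‖e‖ ≤ amax * ‖w‖ := by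
  have hsq : (amin * ‖e‖) * ‖e‖ ≤ (amax * ‖w‖) * ‖e‖ := by
    calc (amin * ‖e‖) * ‖e‖ = amin * ‖e‖ ^ 2 := by ring
      _ ≤ B e w := h ▸ hcoer e
      _ ≤ amax * ‖e‖ * ‖w‖ := (le_abs_self _).trans (hbdd e w)
      _ = (amax * ‖w‖) * ‖e‖ := by ring
  rcases (norm_nonneg e).eq_or_lt with he | he
  · rw [← he, mul_zero]
    positivity
  · exact le_of_mul_le_mul_right hsq he

end Galerkin

theorem cea_lemma_general {V : Type*} [NormedAddCommGroup V] [InnerProductSpace ℝ V]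
    (B : V → V → ℝ)
    (hB : ∀ w : V, IsLinearMap ℝ (B w)) (hB' : ∀ v : V, IsLinearMap ℝ fun w => B w v)
    (amin amax : ℝ) (h0 : 0 < amin) (hle : amin ≤ amax)
    (hcoer : ∀ v : V, amin * ‖v‖ ^ 2 ≤ B v v)
    (hbdd : ∀ w v : V, |B w v| ≤ amax * ‖w‖ * ‖v‖)
    (Vh : Submodule ℝ V)
    (F : V →L[ℝ] ℝ) (u : V) (uh : V) (huh_mem : uh ∈ Vh)
    (hu : ∀ v : V, B u v = F v)
    (huh : ∀ vh ∈ Vh, B uh vh = F vh) :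
    ‖u - uh‖ ≤ (amax / amin) * ⨅ vh : Vh, ‖u - (vh : V)‖ := by
  have horth := galerkin_orthogonality hB' (fun v _ => hu v) huh
  have hamax : 0 ≤ amax := h0.le.trans hle
  have : Nonempty Vh := ⟨⟨uh, huh_mem⟩⟩
  rw [Real.mul_iInf_of_nonneg (div_nonneg hamax h0.le)]
  refine le_ciInf fun vh => ?_
  rw [div_mul_eq_mul_div, le_div_iff₀ h0, mul_comm]
  exact mul_norm_le_of_coercive_of_bounded hamax hcoer hbdd
    (apply_self_eq_apply_sub_of_orthogonal hB horth huh_mem vh.2)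

theorem cea_lemma {V : Type*} [NormedAddCommGroup V] [InnerProductSpace ℝ V]
    [CompleteSpace V]
    (B : V → V → ℝ)
    (hB : ∀ w : V, IsLinearMap ℝ (B w)) (hB' : ∀ v : V, IsLinearMap ℝ fun w => B w v)
    (amin amax : ℝ) (h0 : 0 < amin) (hle : amin ≤ amax)
    (hcoer : ∀ v : V, amin * ‖v‖ ^ 2 ≤ B v v)
    (hbdd : ∀ w v : V, |B w v| ≤ amax * ‖w‖ * ‖v‖)
    (Vh : Submodule ℝ V) (hVh : IsClosed (Vh : Set V))
    (F : V →L[ℝ] ℝ) (u : V) (uh : V) (huh_mem : uh ∈ Vh)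
    (hu : ∀ v : V, B u v = F v)
    (huh : ∀ vh ∈ Vh, B uh vh = F vh) :
    ‖u - uh‖ ≤ (amax / amin) * ⨅ vh : Vh, ‖u - (vh : V)‖ :=
  cea_lemma_general B hB hB' amin amax h0 hle hcoer hbdd Vh F u uh huh_mem hu huh
end
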